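/- For every natural number n ≥ 1, τ(B_n) > B_{⌊τ(n)/3⌋}, where τ denotes the number-of-divisors function, ⌊·⌋ the floor function, and B the balancing sequence. -/

import Mathlib

/-!
Each divisor `e > 1` of `n` contributes a primitive prime factor of `B e ∣ B n` (one dividing no
earlier balancing number), so `B n` has at least `τ(n) - 1` prime factors and
`τ(B n) ≥ 2 ^ (τ(n) - 1)`, whereas `2 B q < 8 ^ q`.

Primitive prime factors exist because of the primitive part `Φ_d = ∏_{e ∣ d} B_e ^ μ(d / e)`.
By the Binet formula, `log Φ_d` is `φ(d) log (3 + 2√2)` up to `1/12`, which exceeds `log d`.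
If `B_d` had no primitive prime factor, every prime `p ∣ B_d` would have rank of apparition
`r < d`; lifting the exponent, `v_p(B_{r m}) = v_p(B_r) + v_p(m)`, turns `v_p(Φ_d)` into
`Σ_{e ∣ d/r} μ(d/(r e)) v_p(e)`, which is `1` if `d / r` is a power of `p` and `0` otherwise;
hence `Φ_d ≤ d`.
-/

def B : ℕ → ℕ
  | 0 => 0
  | 1 => 1
  | (n + 2) => 6 * B (n + 1) - B n

open scoped ArithmeticFunction.Moebius

/-- The Lucas-balancing numbers. -/
def C : ℕ → ℕ
  | 0 => 1
  | 1 => 3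
  | (n + 2) => 6 * C (n + 1) - C n

lemma B_succ_and_C_succ (n : ℕ) :
    B (n + 1) = C n + 3 * B n ∧ C (n + 1) = 3 * C n + 8 * B n := by
  induction n with
  | zero => simp [B, C]
  | succ n ih =>
    refine ⟨?_, ?_⟩
    · change 6 * B (n + 1) - B n = C (n + 1) + 3 * B (n + 1)
      omega
    · change 6 * C (n + 1) - C n = 3 * C (n + 1) + 8 * B (n + 1)
      omega

lemma B_succ (n : ℕ) : B (n + 1) = C n + 3 * B n := (B_succ_and_C_succ n).1

lemma C_succ (n : ℕ) : C (n + 1) = 3 * C n + 8 * B n := (B_succ_and_C_succ n).2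

lemma B_add_and_C_add (m n : ℕ) :
    B (m + n) = B m * C n + C m * B n ∧ C (m + n) = C m * C n + 8 * B m * B n := by
  induction n with
  | zero => simp [B, C]
  | succ n ih =>
    rw [← add_assoc, B_succ (m + n), C_succ (m + n), B_succ n, C_succ n, ih.1, ih.2]
    constructor <;> ring

lemma B_add (m n : ℕ) : B (m + n) = B m * C n + C m * B n := (B_add_and_C_add m n).1

lemma C_add (m n : ℕ) : C (m + n) = C m * C n + 8 * B m * B n := (B_add_and_C_add m n).2

lemma C_sq (n : ℕ) : C n ^ 2 = 8 * B n ^ 2 + 1 := by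
  induction n with
  | zero => simp [B, C]
  | succ n ih => rw [B_succ, C_succ]; nlinarith [ih]

lemma coprime_B_C (n : ℕ) : (B n).Coprime (C n) := by
  have h : (B n).gcd (C n) ∣ C n ^ 2 - 8 * B n ^ 2 :=
    Nat.dvd_sub (dvd_pow (Nat.gcd_dvd_right _ _) two_ne_zero)
      (dvd_mul_of_dvd_right (dvd_pow (Nat.gcd_dvd_left _ _) two_ne_zero) 8)
  rwa [C_sq, Nat.add_sub_cancel_left, Nat.dvd_one] at h

lemma C_pos (n : ℕ) : 0 < C n := by
  refine Nat.pos_of_ne_zero fun h => ?_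
  simpa [h] using C_sq n

lemma B_lt_B_succ (n : ℕ) : B n < B (n + 1) := by
  rw [B_succ]
  have := C_pos n
  omega

lemma strictMono_B : StrictMono B := strictMono_nat_of_lt_succ B_lt_B_succ

lemma B_pos {n : ℕ} (hn : 0 < n) : 0 < B n := strictMono_B hn

lemma B_add_two (n : ℕ) : B (n + 2) + B n = 6 * B (n + 1) := by
  have := (B_lt_B_succ n).le
  rw [B]
  omega

lemma gcd_B_B_add_self (m n : ℕ) : (B m).gcd (B (n + m)) = (B m).gcd (B n) := by
  rw [B_add, Nat.gcd_add_mul_right_right,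
    Nat.Coprime.gcd_mul_right_cancel_right _ (coprime_B_C m).symm]

lemma gcd_B_B_add_mul_self (m n : ℕ) :
    ∀ k, (B m).gcd (B (n + k * m)) = (B m).gcd (B n)
  | 0 => by simp
  | k + 1 => by
    rw [← gcd_B_B_add_mul_self m n k, add_mul, ← add_assoc, one_mul, gcd_B_B_add_self]

theorem isStrongDvdSequence_B : Nat.IsStrongDvdSequence B := by
  intro m n
  induction m, n using Nat.gcd.induction with
  | H0 => simp [B]
  | H1 m n _ h' =>
    rw [← Nat.gcd_rec m n] at h'
    conv_lhs => rw [← Nat.mod_add_div' n m]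
    rwa [gcd_B_B_add_mul_self m (n % m) (n / m), Nat.gcd_comm (B m) _]

lemma B_dvd_B {d n : ℕ} (h : d ∣ n) : B d ∣ B n :=
  isStrongDvdSequence_B.isDvdSequence d n h

theorem Nat.IsStrongDvdSequence.dvd_iff_dvd_of_minimal {f : ℕ → ℕ}
    (hf : Nat.IsStrongDvdSequence f) {m r : ℕ} (hr : 0 < r) (hmr : m ∣ f r)
    (hmin : ∀ e, 0 < e → e < r → ¬ m ∣ f e) (j : ℕ) : m ∣ f j ↔ r ∣ j := by
  refine ⟨fun hmj => ?_, fun hrj => hmr.trans (hf.isDvdSequence r j hrj)⟩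
  rcases Nat.eq_zero_or_pos j with rfl | hj
  · exact dvd_zero r
  have hgcd : m ∣ f (r.gcd j) := hf r j ▸ Nat.dvd_gcd hmr hmj
  have hle : r.gcd j ≤ r := Nat.gcd_le_left j hr
  have hge : r ≤ r.gcd j := by
    by_contra! hlt
    exact hmin _ (Nat.gcd_pos_of_pos_left j hr) hlt hgcd
  exact le_antisymm hle hge ▸ Nat.gcd_dvd_right r j

lemma C_mul_modEq (r m : ℕ) : C (r * m) ≡ C r ^ m [MOD B r ^ 2] := by
  induction m with
  | zero => simp [C]; rfl
  | succ m ih =>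
    have h0 : 8 * B (r * m) * B r ≡ 0 [MOD B r ^ 2] := Nat.modEq_zero_iff_dvd.mpr <| by
      rw [sq]
      exact mul_dvd_mul (dvd_mul_of_dvd_right (B_dvd_B (dvd_mul_right r m)) 8) dvd_rfl
    calc C (r * (m + 1)) = C (r * m) * C r + 8 * B (r * m) * B r := by rw [Nat.mul_succ, C_add]
      _ ≡ C r ^ m * C r + 0 [MOD B r ^ 2] := (ih.mul_right _).add h0
      _ = C r ^ (m + 1) := by ring

lemma exists_B_mul_succ_eq (r m : ℕ) :
    ∃ Q, B (r * (m + 1)) = B r * Q ∧ Q ≡ (m + 1) * C r ^ m [MOD B r ^ 2] := by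
  induction m with
  | zero => exact ⟨1, by simp, by simp; rfl⟩
  | succ m ih =>
    obtain ⟨Q, hB, hQ⟩ := ih
    refine ⟨Q * C r + C (r * (m + 1)), ?_, ?_⟩
    · rw [Nat.mul_succ, B_add, hB]
      ring
    · calc Q * C r + C (r * (m + 1))
          ≡ (m + 1) * C r ^ m * C r + C r ^ (m + 1) [MOD B r ^ 2] :=
            (hQ.mul_right _).add (C_mul_modEq r (m + 1))
        _ = (m + 1 + 1) * C r ^ (m + 1) := by ring

lemma not_dvd_C_of_dvd_B {p r : ℕ} (hp : p.Prime) (hpr : p ∣ B r) : ¬ p ∣ C r :=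
  fun hpC => hp.one_lt.ne' (Nat.eq_one_of_dvd_one (coprime_B_C r ▸ Nat.dvd_gcd hpr hpC))

lemma factorization_B_mul_of_not_dvd {p r m : ℕ} (hp : p.Prime) (hr : 0 < r) (hpr : p ∣ B r)
    (hpm : ¬ p ∣ m) :
    (B (r * m)).factorization p = (B r).factorization p := by
  obtain ⟨k, rfl⟩ : ∃ k, m = k + 1 :=
    Nat.exists_eq_succ_of_ne_zero (by rintro rfl; simp at hpm)
  obtain ⟨Q, hB, hQ⟩ := exists_B_mul_succ_eq r k
  have hpQ : ¬ p ∣ Q := by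
    rw [hQ.dvd_iff (dvd_pow hpr two_ne_zero)]
    intro h
    rcases hp.dvd_mul.mp h with h | h
    · exact hpm h
    · exact not_dvd_C_of_dvd_B hp hpr (hp.dvd_of_dvd_pow h)
  have hQ0 : Q ≠ 0 := by rintro rfl; simp at hpQ
  rw [hB, Nat.factorization_mul (B_pos hr).ne' hQ0, Finsupp.add_apply,
    Nat.factorization_eq_zero_of_not_dvd hpQ, add_zero]

lemma factorization_B_mul_self {p r : ℕ} (hp : p.Prime) (hr : 0 < r) (hpr : p ∣ B r) :
    (B (r * p)).factorization p = (B r).factorization p + 1 := by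
  obtain ⟨k, hk⟩ : ∃ k, p = k + 1 := Nat.exists_eq_succ_of_ne_zero hp.ne_zero
  obtain ⟨Q, hB, hQ⟩ := exists_B_mul_succ_eq r k
  rw [← hk] at hB hQ
  replace hQ : Q ≡ p * C r ^ k [MOD p ^ 2] := Nat.ModEq.of_dvd (pow_dvd_pow_of_dvd hpr 2) hQ
  obtain ⟨Q', rfl⟩ : p ∣ Q :=
    (hQ.dvd_iff (dvd_pow_self p two_ne_zero)).mpr (dvd_mul_right p _)
  have hpQ' : ¬ p ∣ Q' := by
    intro h
    have : p * p ∣ p * C r ^ k := (hQ.dvd_iff (by rw [sq])).mp (mul_dvd_mul_left p h)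
    exact not_dvd_C_of_dvd_B hp hpr (hp.dvd_of_dvd_pow (Nat.dvd_of_mul_dvd_mul_left hp.pos this))
  have hQ'0 : Q' ≠ 0 := by rintro rfl; simp at hpQ'
  rw [hB, Nat.factorization_mul (B_pos hr).ne' (mul_ne_zero hp.ne_zero hQ'0),
    Nat.factorization_mul hp.ne_zero hQ'0]
  simp [hp.factorization_self, Nat.factorization_eq_zero_of_not_dvd hpQ']

theorem factorization_B_mul {p r m : ℕ} (hp : p.Prime) (hr : 0 < r) (hpr : p ∣ B r)
    (hm : m ≠ 0) :
    (B (r * m)).factorization p = (B r).factorization p + m.factorization p := by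
  obtain ⟨k, m', hpm', rfl⟩ := Nat.exists_eq_pow_mul_and_not_dvd hm p hp.ne_one
  have hpos : ∀ k, 0 < r * p ^ k := fun k => Nat.mul_pos hr (pow_pos hp.pos k)
  have hdvd : ∀ k, p ∣ B (r * p ^ k) := fun k => hpr.trans (B_dvd_B (dvd_mul_right r _))
  have hpow : ∀ k, (B (r * p ^ k)).factorization p = (B r).factorization p + k := by
    intro k
    induction k with
    | zero => simp
    | succ k ih =>
      rw [pow_succ, ← mul_assoc, factorization_B_mul_self hp (hpos k) (hdvd k), ih, add_assoc]
  have hm'0 : m' ≠ 0 := by rintro rfl; simp at hpm'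
  rw [← mul_assoc, factorization_B_mul_of_not_dvd hp (hpos k) (hdvd k) hpm', hpow,
    Nat.factorization_mul (pow_ne_zero k hp.ne_zero) hm'0]
  simp [hp.factorization_self, Nat.factorization_eq_zero_of_not_dvd hpm']

theorem sum_divisors_moebius_mul_eq {R : Type*} [Ring R] {f g : ℕ → R}
    (h : ∀ n > 0, ∑ i ∈ n.divisors, f i = g n) {n : ℕ} (hn : 0 < n) :
    ∑ e ∈ n.divisors, (μ (n / e) : R) * g e = f n := by
  rw [← Nat.sum_divisorsAntidiagonal' (f := fun a b => (μ a : R) * g b)]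
  exact ArithmeticFunction.sum_eq_iff_sum_mul_moebius_eq.mp h n hn

lemma sum_divisors_moebius_eq_zero {n : ℕ} (hn : 1 < n) :
    ∑ e ∈ n.divisors, μ (n / e) = 0 := by
  have h : ∀ n > 0, ∑ i ∈ n.divisors, (if i = 1 then 1 else 0 : ℤ) = 1 := fun n hn => by
    simp [Finset.sum_ite_eq', Nat.one_mem_divisors.mpr hn.ne']
  simpa [hn.ne'] using sum_divisors_moebius_mul_eq h (zero_lt_one.trans hn)

lemma sum_divisors_moebius_mul_self {n : ℕ} (hn : 0 < n) :
    ∑ e ∈ n.divisors, (μ (n / e) : ℝ) * e = n.totient :=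
  sum_divisors_moebius_mul_eq (f := fun i => (i.totient : ℝ)) (g := fun i => (i : ℝ))
    (fun n _ => by exact_mod_cast Nat.sum_totient n) hn

lemma card_divisors_filter_primeFactors_eq_singleton {p n : ℕ} (hp : p.Prime) (hn : n ≠ 0) :
    {i ∈ n.divisors | i.primeFactors = {p}}.card = n.factorization p := by
  suffices {i ∈ n.divisors | i.primeFactors = {p}} = (Finset.Icc 1 (n.factorization p)).map
      ⟨(p ^ ·), Nat.pow_right_injective hp.two_le⟩ by simp [this]
  ext i
  simp only [Finset.mem_filter, Nat.mem_divisors, Finset.mem_map, Finset.mem_Icc,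
    Function.Embedding.coeFn_mk]
  constructor
  · rintro ⟨⟨hin, -⟩, hi⟩
    have hi0 : i ≠ 0 := by rintro rfl; simp at hi
    have hpi : p ∈ i.primeFactors := hi ▸ Finset.mem_singleton_self p
    refine ⟨i.factorization p,
      ⟨hp.factorization_pos_of_dvd hi0 (Nat.dvd_of_mem_primeFactors hpi),
        (Nat.factorization_le_iff_dvd hi0 hn).mpr hin p⟩, ?_⟩
    refine (Nat.eq_pow_of_factorization_eq_single hi0 ?_).symm
    rw [Finsupp.eq_single_iff]
    exact ⟨by simp [hi], rfl⟩
  · rintro ⟨k, ⟨hk1, hkn⟩, rfl⟩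
    exact ⟨⟨(hp.pow_dvd_iff_le_factorization hn).mpr hkn, hn⟩,
      Nat.primeFactors_prime_pow (by omega) hp⟩

lemma sum_divisors_moebius_mul_factorization {p n : ℕ} (hp : p.Prime) (hn : 0 < n) :
    ∑ e ∈ n.divisors, (μ (n / e) : ℤ) * e.factorization p =
      if n.primeFactors = {p} then 1 else 0 := by
  refine sum_divisors_moebius_mul_eq (f := fun i => if i.primeFactors = {p} then 1 else 0)
    (g := fun i => (i.factorization p : ℤ)) (fun n hn => ?_) hn
  rw [Finset.sum_boole, card_divisors_filter_primeFactors_eq_singleton hp hn.ne']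

lemma sum_divisors_mul_of_support_dvd {M : Type*} [AddCommMonoid M] {r m : ℕ} (hr : 0 < r)
    (F : ℕ → ℕ → M) (hF : ∀ a e, ¬ r ∣ e → F a e = 0) :
    ∑ e ∈ (r * m).divisors, F (r * m / e) e = ∑ e ∈ m.divisors, F (m / e) (r * e) := by
  have hinj : Set.InjOn (r * ·) m.divisors := fun a _ b _ h => Nat.eq_of_mul_eq_mul_left hr h
  have himage : m.divisors.image (r * ·) ⊆ (r * m).divisors := by
    intro e he
    obtain ⟨e', he', rfl⟩ := Finset.mem_image.mp he
    obtain ⟨he'm, hm⟩ := Nat.mem_divisors.mp he'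
    exact Nat.mem_divisors.mpr ⟨mul_dvd_mul_left r he'm, mul_ne_zero hr.ne' hm⟩
  rw [← Finset.sum_subset himage (fun e he hne => hF _ _ ?_), Finset.sum_image hinj]
  · exact Finset.sum_congr rfl fun e _ => by rw [Nat.mul_div_mul_left m e hr]
  · rintro ⟨e', rfl⟩
    obtain ⟨hem, hm⟩ := Nat.mem_divisors.mp he
    exact hne (Finset.mem_image.mpr ⟨e', Nat.mem_divisors.mpr
      ⟨Nat.dvd_of_mul_dvd_mul_left hr hem, right_ne_zero_of_mul hm⟩, rfl⟩)

lemma sum_divisors_moebius_mul_factorization_B_le {p d : ℕ} (hp : p.Prime) (hd : 0 < d)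
    (hnp : p ∣ B d → ∃ e, 0 < e ∧ e < d ∧ p ∣ B e) :
    ∑ e ∈ d.divisors, (μ (d / e) : ℤ) * (B e).factorization p ≤ d.factorization p := by
  by_cases hpd : p ∣ B d
  swap
  · refine (Finset.sum_eq_zero fun e he => ?_).trans_le (Nat.cast_nonneg _)
    have hpe : ¬ p ∣ B e := fun h => hpd (h.trans (B_dvd_B (Nat.dvd_of_mem_divisors he)))
    simp [Nat.factorization_eq_zero_of_not_dvd hpe]
  have hex : ∃ r, 0 < r ∧ p ∣ B r := ⟨d, hd, hpd⟩
  obtain ⟨hr, hpr⟩ := Nat.find_spec hex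
  -- `r` is the rank of apparition of `p`
  set r := Nat.find hex
  have hrank := isStrongDvdSequence_B.dvd_iff_dvd_of_minimal hr hpr
    fun e he hlt hpe => Nat.find_min hex hlt ⟨he, hpe⟩
  obtain ⟨e₀, he₀, he₀d, hpe₀⟩ := hnp hpd
  have hrd : r < d := (Nat.find_min' hex ⟨he₀, hpe₀⟩).trans_lt he₀d
  obtain ⟨m, rfl⟩ := (hrank d).mp hpd
  have hm : 1 < m := by
    by_contra! h
    interval_cases m <;> simp at hrd hd
  rw [sum_divisors_mul_of_support_dvd hr (fun a e => (μ a : ℤ) * (B e).factorization p)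
    fun a e hre => by simp [Nat.factorization_eq_zero_of_not_dvd (mt (hrank e).mp hre)]]
  calc ∑ e ∈ m.divisors, (μ (m / e) : ℤ) * (B (r * e)).factorization p
      = ∑ e ∈ m.divisors, ((μ (m / e) : ℤ) * (B r).factorization p +
          (μ (m / e) : ℤ) * e.factorization p) :=
        Finset.sum_congr rfl fun e he => by
          rw [factorization_B_mul hp hr hpr (Nat.pos_of_mem_divisors he).ne']
          push_cast
          ring
    _ = if m.primeFactors = {p} then 1 else 0 := by
        rw [Finset.sum_add_distrib, ← Finset.sum_mul, sum_divisors_moebius_eq_zero hm, zero_mul,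
          zero_add, sum_divisors_moebius_mul_factorization hp (by omega)]
    _ ≤ (r * m).factorization p := by
        split_ifs with h
        · have hpm : p ∣ m := Nat.dvd_of_mem_primeFactors (h ▸ Finset.mem_singleton_self p)
          exact_mod_cast hp.factorization_pos_of_dvd (by positivity) (hpm.mul_left r)
        · positivity

lemma log_eq_sum_factorization_mul_log {n : ℕ} {s : Finset ℕ} (hs : n.primeFactors ⊆ s) :
    Real.log n = ∑ p ∈ s, n.factorization p * Real.log p := by
  rw [Real.log_nat_eq_sum_factorization,
    Finsupp.sum_of_support_subset _ (by simpa using hs) _ (fun _ _ => by simp)]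

noncomputable def logPrimitivePart (d : ℕ) : ℝ :=
  ∑ e ∈ d.divisors, (μ (d / e) : ℝ) * Real.log (B e)

theorem logPrimitivePart_le_log {d : ℕ} (hd : 0 < d)
    (h : ∀ p, p.Prime → p ∣ B d → ∃ e, 0 < e ∧ e < d ∧ p ∣ B e) :
    logPrimitivePart d ≤ Real.log d := by
  set s := (d * B d).primeFactors
  have hs0 : d * B d ≠ 0 := mul_ne_zero hd.ne' (B_pos hd).ne'
  have hs : ∀ e ∈ d.divisors, (B e).primeFactors ⊆ s := fun e he =>
    Nat.primeFactors_mono ((B_dvd_B (Nat.dvd_of_mem_divisors he)).mul_left d) hs0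
  calc logPrimitivePart d
      = ∑ p ∈ s,
          ((∑ e ∈ d.divisors, μ (d / e) * ((B e).factorization p : ℤ) : ℤ) : ℝ) * Real.log p := by
        rw [logPrimitivePart, Finset.sum_congr rfl fun e he => by
          rw [log_eq_sum_factorization_mul_log (hs e he), Finset.mul_sum], Finset.sum_comm]
        push_cast
        simp_rw [Finset.sum_mul, mul_assoc]
    _ ≤ ∑ p ∈ s, (d.factorization p : ℝ) * Real.log p := by
        refine Finset.sum_le_sum fun p hp =>
          mul_le_mul_of_nonneg_right ?_ (Real.log_natCast_nonneg p)
        exact_mod_cast sum_divisors_moebius_mul_factorization_B_le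
          (Nat.prime_of_mem_primeFactors hp) hd (h p (Nat.prime_of_mem_primeFactors hp))
    _ = Real.log d :=
        (log_eq_sum_factorization_mul_log (Nat.primeFactors_mono (dvd_mul_right d _) hs0)).symm

lemma sub_inv_mul_B {x : ℝ} (hx : x + x⁻¹ = 6) (n : ℕ) :
    (x - x⁻¹) * B n = x ^ n - x⁻¹ ^ n := by
  induction n using Nat.twoStepInduction with
  | zero => simp [B]
  | one => simp [B]
  | more n ih₀ ih₁ =>
    have h : (B (n + 2) : ℝ) = 6 * B (n + 1) - B n := by
      rw [eq_sub_iff_add_eq]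
      exact_mod_cast B_add_two n
    have hx0 : x * x⁻¹ = 1 := mul_inv_cancel₀ (by rintro rfl; norm_num at hx)
    rw [h, mul_sub, mul_left_comm, ih₁, ih₀, ← hx]
    linear_combination (x ^ n - x⁻¹ ^ n) * hx0

lemma log_B_eq {x : ℝ} (hx : x + x⁻¹ = 6) (hx1 : 1 < x) {n : ℕ} (hn : 0 < n) :
    Real.log (B n) = n * Real.log x + Real.log (1 - x⁻¹ ^ (2 * n)) - Real.log (x - x⁻¹) := by
  have hx0 : 0 < x := zero_lt_one.trans hx1
  have hinv : x⁻¹ < 1 := inv_lt_one_of_one_lt₀ hx1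
  have hsub : 0 < x - x⁻¹ := by linarith
  have hpow : x⁻¹ ^ (2 * n) < 1 := pow_lt_one₀ (by positivity) hinv (by omega)
  have hB : (B n : ℝ) = x ^ n * (1 - x⁻¹ ^ (2 * n)) / (x - x⁻¹) := by
    rw [eq_div_iff hsub.ne', mul_comm, sub_inv_mul_B hx, mul_sub, pow_mul, ← mul_pow,
      mul_one, sq, ← mul_assoc, mul_inv_cancel₀ hx0.ne', one_mul]
  rw [hB, Real.log_div (by positivity) hsub.ne', Real.log_mul (by positivity)
    (by linarith), Real.log_pow]

lemma logPrimitivePart_eq {x : ℝ} (hx : x + x⁻¹ = 6) (hx1 : 1 < x) {d : ℕ} (hd : 1 < d) :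
    logPrimitivePart d = d.totient * Real.log x +
      ∑ e ∈ d.divisors, (μ (d / e) : ℝ) * Real.log (1 - x⁻¹ ^ (2 * e)) := by
  have hμ : ∑ e ∈ d.divisors, (μ (d / e) : ℝ) = 0 := by
    exact_mod_cast sum_divisors_moebius_eq_zero hd
  rw [logPrimitivePart, Finset.sum_congr rfl fun e he => by
    rw [log_B_eq hx hx1 (Nat.pos_of_mem_divisors he)], ← sum_divisors_moebius_mul_self (by omega)]
  simp only [mul_sub, mul_add, Finset.sum_sub_distrib, Finset.sum_add_distrib, ← mul_assoc,
    ← Finset.sum_mul, hμ, zero_mul, sub_zero]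

lemma abs_log_one_sub_inv_pow_le {x : ℝ} (hx : 5 ≤ x) {e : ℕ} (he : 0 < e) :
    |Real.log (1 - x⁻¹ ^ (2 * e))| ≤ 2 * (1 / 25) ^ e := by
  have hinv : x⁻¹ ^ 2 ≤ 1 / 25 := by
    rw [inv_pow, one_div]
    exact inv_anti₀ (by norm_num) (by nlinarith)
  have ht0 : 0 ≤ x⁻¹ ^ (2 * e) := by positivity
  have ht : x⁻¹ ^ (2 * e) ≤ (1 / 25) ^ e := by
    rw [pow_mul]
    exact pow_le_pow_left₀ (by positivity) hinv e
  have ht1 : (1 / 25 : ℝ) ^ e ≤ 1 / 25 := pow_le_of_le_one (by norm_num) (by norm_num) he.ne'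
  have hlog := Real.abs_log_sub_add_sum_range_le (x := x⁻¹ ^ (2 * e))
    (by rw [abs_of_nonneg ht0]; linarith) 0
  rw [Finset.sum_range_zero, zero_add, pow_one, abs_of_nonneg ht0] at hlog
  calc |Real.log (1 - x⁻¹ ^ (2 * e))| ≤ x⁻¹ ^ (2 * e) / (1 - x⁻¹ ^ (2 * e)) := hlog
    _ ≤ 2 * x⁻¹ ^ (2 * e) := by rw [div_le_iff₀ (by linarith)]; nlinarith
    _ ≤ 2 * (1 / 25) ^ e := by linarith

lemma abs_sum_moebius_mul_log_one_sub_le {x : ℝ} (hx : 5 ≤ x) (d : ℕ) :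
    |∑ e ∈ d.divisors, (μ (d / e) : ℝ) * Real.log (1 - x⁻¹ ^ (2 * e))| ≤ 1 / 12 := by
  calc |∑ e ∈ d.divisors, (μ (d / e) : ℝ) * Real.log (1 - x⁻¹ ^ (2 * e))|
      ≤ ∑ e ∈ d.divisors, |(μ (d / e) : ℝ) * Real.log (1 - x⁻¹ ^ (2 * e))| :=
        Finset.abs_sum_le_sum_abs _ _
    _ ≤ ∑ e ∈ d.divisors, 2 * (1 / 25 : ℝ) ^ e := Finset.sum_le_sum fun e he => by
        have hμ : |(μ (d / e) : ℝ)| ≤ 1 := by exact_mod_cast ArithmeticFunction.abs_moebius_le_one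
        rw [abs_mul]
        exact (mul_le_mul hμ (abs_log_one_sub_inv_pow_le hx (Nat.pos_of_mem_divisors he))
          (abs_nonneg _) zero_le_one).trans_eq (one_mul _)
    _ ≤ ∑ e ∈ Finset.Ico 1 (d + 1), 2 * (1 / 25 : ℝ) ^ e :=
        Finset.sum_le_sum_of_subset_of_nonneg (fun e he => Finset.mem_Ico.mpr
          ⟨Nat.pos_of_mem_divisors he, Nat.lt_succ_of_le (Nat.divisor_le he)⟩)
          (fun _ _ _ => by positivity)
    _ ≤ 2 * ((1 / 25) ^ 1 / (1 - 1 / 25)) := by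
        rw [← Finset.mul_sum]
        gcongr
        exact geom_sum_Ico_le_of_lt_one (by norm_num) (by norm_num)
    _ = 1 / 12 := by norm_num

lemma prod_le_two_mul_prod_sub_one_sq {P : Finset ℕ} (hP : ∀ p ∈ P, p.Prime) :
    ∏ p ∈ P, p ≤ 2 * ∏ p ∈ P, (p - 1) ^ 2 := by
  calc ∏ p ∈ P, p ≤ ∏ p ∈ P, ((if p = 2 then 2 else 1) * (p - 1) ^ 2) := by
        refine Finset.prod_le_prod' fun p hp => ?_
        have h2 := (hP p hp).two_le
        split_ifs with h
        · subst h; norm_num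
        · calc p ≤ 2 * (p - 1) := by omega
            _ ≤ (p - 1) * (p - 1) := Nat.mul_le_mul_right _ (by omega)
            _ = 1 * (p - 1) ^ 2 := by ring
    _ = (if 2 ∈ P then 2 else 1) * ∏ p ∈ P, (p - 1) ^ 2 := by
        rw [Finset.prod_mul_distrib, Finset.prod_ite_eq']
    _ ≤ 2 * ∏ p ∈ P, (p - 1) ^ 2 := by
        gcongr
        split_ifs <;> norm_num

lemma le_two_mul_totient_sq (d : ℕ) : d ≤ 2 * d.totient ^ 2 := by
  rcases Nat.eq_zero_or_pos d with rfl | hd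
  · simp
  set Q := ∏ p ∈ d.primeFactors, (p - 1)
  have hQ : 0 < Q := Finset.prod_pos fun p hp => by
    have := (Nat.prime_of_mem_primeFactors hp).two_le
    omega
  have hQφ : Q ≤ d.totient := Nat.le_of_dvd (Nat.totient_pos.mpr hd)
    (Nat.totient_eq_div_primeFactors_mul d ▸ dvd_mul_left _ _)
  have hdQ : d * Q ≤ 2 * d.totient * Q * Q := by
    calc d * Q = d.totient * ∏ p ∈ d.primeFactors, p :=
          (Nat.totient_mul_prod_primeFactors d).symm
      _ ≤ d.totient * (2 * ∏ p ∈ d.primeFactors, (p - 1) ^ 2) := Nat.mul_le_mul_left _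
          (prod_le_two_mul_prod_sub_one_sq fun _ => Nat.prime_of_mem_primeFactors)
      _ = 2 * d.totient * Q * Q := by rw [Finset.prod_pow]; ring
  calc d ≤ 2 * d.totient * Q := Nat.le_of_mul_le_mul_right hdQ hQ
    _ ≤ 2 * d.totient * d.totient := Nat.mul_le_mul_left _ hQφ
    _ = 2 * d.totient ^ 2 := by ring

lemma four_mul_sq_lt_five_pow {D : ℕ} (hD : 0 < D) : 4 * D ^ 2 < 5 ^ D := by
  induction D, hD using Nat.le_induction with
  | base => norm_num
  | succ D hD ih =>
    rw [pow_succ 5 D]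
    nlinarith

lemma exists_add_inv_eq_six : ∃ x : ℝ, x + x⁻¹ = 6 ∧ 5 ≤ x := by
  have hs : √2 ^ 2 = 2 := Real.sq_sqrt zero_le_two
  have hinv : (3 + 2 * √2)⁻¹ = 3 - 2 * √2 := inv_eq_of_mul_eq_one_right (by nlinarith)
  refine ⟨3 + 2 * √2, by rw [hinv]; ring, ?_⟩
  nlinarith [Real.sqrt_nonneg 2]

theorem log_lt_logPrimitivePart {d : ℕ} (hd : 1 < d) : Real.log d < logPrimitivePart d := by
  obtain ⟨x, hx, hx5⟩ := exists_add_inv_eq_six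
  have hD : 0 < d.totient := Nat.totient_pos.mpr (by omega)
  have hpow : (d : ℝ) * 2 < x ^ d.totient := by
    have h5 : (5 : ℝ) ^ d.totient ≤ x ^ d.totient := pow_le_pow_left₀ (by norm_num) hx5 _
    have hd2 : d * 2 < 5 ^ d.totient := by
      have := le_two_mul_totient_sq d
      have := four_mul_sq_lt_five_pow hD
      omega
    have : ((d * 2 : ℕ) : ℝ) < ((5 ^ d.totient : ℕ) : ℝ) := by exact_mod_cast hd2
    push_cast at this
    linarith
  have hlog : Real.log d + Real.log 2 < d.totient * Real.log x := by
    rw [← Real.log_mul (by positivity) two_ne_zero, ← Real.log_pow]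
    exact Real.log_lt_log (by positivity) hpow
  have herr := (abs_le.mp (abs_sum_moebius_mul_log_one_sub_le hx5 d)).1
  have := Real.log_two_gt_d9
  rw [logPrimitivePart_eq hx (by linarith) hd]
  linarith

theorem exists_primitive_prime_dvd_B {d : ℕ} (hd : 1 < d) :
    ∃ p, p.Prime ∧ p ∣ B d ∧ ∀ e, 0 < e → e < d → ¬ p ∣ B e := by
  by_contra! h
  exact (log_lt_logPrimitivePart hd).not_ge (logPrimitivePart_le_log (by omega) h)

lemma card_divisors_le_card_primeFactors_B_add_one {n : ℕ} (hn : 0 < n) :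
    n.divisors.card ≤ (B n).primeFactors.card + 1 := by
  choose! P hP using fun d (hd : 1 < d) => exists_primitive_prime_dvd_B hd
  have hlt : ∀ d ∈ n.divisors.erase 1, 1 < d := fun d hd => by
    obtain ⟨hd1, hdn⟩ := Finset.mem_erase.mp hd
    have := Nat.pos_of_mem_divisors hdn
    omega
  have hmaps : Set.MapsTo P (n.divisors.erase 1) (B n).primeFactors := fun d hd => by
    obtain ⟨hp, hpd, -⟩ := hP d (hlt d hd)
    exact Nat.mem_primeFactors.mpr ⟨hp, hpd.trans (B_dvd_B (Nat.dvd_of_mem_divisors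
      (Finset.mem_of_mem_erase hd))), (B_pos hn).ne'⟩
  have hne : ∀ d₁ ∈ n.divisors.erase 1, ∀ d₂ ∈ n.divisors.erase 1, d₁ < d₂ → P d₁ ≠ P d₂ :=
    fun d₁ hd₁ d₂ hd₂ h heq => (hP d₂ (hlt d₂ hd₂)).2.2 d₁ (by linarith [hlt d₁ hd₁]) h
      (heq ▸ (hP d₁ (hlt d₁ hd₁)).2.1)
  have hinj : Set.InjOn P (n.divisors.erase 1) := fun d₁ hd₁ d₂ hd₂ heq => by
    rcases lt_trichotomy d₁ d₂ with h | h | h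
    · exact absurd heq (hne d₁ hd₁ d₂ hd₂ h)
    · exact h
    · exact absurd heq.symm (hne d₂ hd₂ d₁ hd₁ h)
  have := Finset.card_le_card_of_injOn P hmaps hinj
  rw [Finset.card_erase_of_mem (Nat.one_mem_divisors.mpr hn.ne')] at this
  omega

lemma two_pow_card_primeFactors_le_card_divisors {m : ℕ} (hm : m ≠ 0) :
    2 ^ m.primeFactors.card ≤ m.divisors.card := by
  rw [Nat.card_divisors hm]
  exact Finset.pow_card_le_prod _ _ _ fun p hp => by
    have := (Nat.prime_of_mem_primeFactors hp).factorization_pos_of_dvd hm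
      (Nat.dvd_of_mem_primeFactors hp)
    omega

lemma two_mul_B_lt_eight_pow (q : ℕ) : 2 * B q < 8 ^ q := by
  induction q using Nat.twoStepInduction with
  | zero => simp [B]
  | one => simp [B]
  | more q _ ih =>
    have := B_add_two q
    rw [pow_succ 8 (q + 1)]
    omega

theorem stmt18 : ∀ n : ℕ, 1 ≤ n → B (n.divisors.card / 3) < (B n).divisors.card := by
  intro n hn
  have hτ := card_divisors_le_card_primeFactors_B_add_one hn
  have hω := two_pow_card_primeFactors_le_card_divisors (B_pos hn).ne'
  have hB := two_mul_B_lt_eight_pow (n.divisors.card / 3)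
  have h8 : 8 ^ (n.divisors.card / 3) ≤ 2 * 2 ^ (B n).primeFactors.card := by
    calc 8 ^ (n.divisors.card / 3) = 2 ^ (3 * (n.divisors.card / 3)) := by rw [pow_mul]; norm_num
      _ ≤ 2 ^ ((B n).primeFactors.card + 1) := Nat.pow_le_pow_right two_pos (by omega)
      _ = 2 * 2 ^ (B n).primeFactors.card := by ring
  omega
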